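/- arXiv:math/0009170 — 2 statements merged into one kernel-verified Lean document; each statement's English description precedes it below -/
import Mathlib

section
/- Let k be a commutative unital ring, A a commutative unital k-algebra, and qA = (A[[λ]], ⋆) a formal deformation of A with first-order term C_1. Define {f, g} := C_1(f,g) − C_1(g,f) for f, g ∈ A. Let P_0 ∈ M_n(A) be an idempotent, E = P_0 A^n, and define {x, a}_E := P_0 · ({x_1, a}, …, {x_n, a})^T ∈ E for x ∈ E, a ∈ A. Then the bracket {·,·}_E satisfies the Leibniz rules of a right Poisson module: {x · c, a}_E = {x, a}_E · c + x · {c, a} and {x, ab}_E = {x, a}_E · b + {x, b}_E · a, for all x ∈ E and a, b, c ∈ A. -/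
open scoped Matrix

/-- Cauchy-type convolution of two formal series along a family of
coefficient maps `B r : M → N → P`:  `(x ⋆ y) n = ∑_{r+i+j=n} B r (x i) (y j)`. -/
def fdConv {M N P : Type*} [AddCommMonoid P] (B : ℕ → M → N → P)
    (x : ℕ → M) (y : ℕ → N) : ℕ → P := fun n =>
  ∑ p ∈ Finset.HasAntidiagonal.antidiagonal n, ∑ q ∈ Finset.HasAntidiagonal.antidiagonal p.2, B p.1 (x q.1) (y q.2)

/-- The unit formal series `1 + 0·λ + 0·λ² + ⋯`. -/
def fdOne (A : Type*) [One A] [Zero A] : ℕ → A := fun n => if n = 0 then 1 else 0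

/-- An element viewed as a constant (order-zero) formal series. -/
def fdC {A : Type*} [Zero A] (a : A) : ℕ → A := fun n => if n = 0 then a else 0

/-- Coefficientwise star of a formal series. -/
def fdStar {A : Type*} [Star A] (x : ℕ → A) : ℕ → A := fun n => star (x n)

/-- Action of a scalar series `c ∈ k[[λ]]` on series with coefficients in a `k`-module. -/
def fdSmul {k M : Type*} [Semiring k] [AddCommMonoid M] [Module k M]
    (c : ℕ → k) (x : ℕ → M) : ℕ → M := fun n =>
  ∑ p ∈ Finset.HasAntidiagonal.antidiagonal n, c p.1 • x p.2

/-- Order-by-order extension of a family of maps `T r : E → F` to formal series: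
`(T x) n = ∑_{r+j=n} T r (x j)`. -/
def fdMap {E F : Type*} [AddCommMonoid F] (T : ℕ → E → F) (x : ℕ → E) : ℕ → F :=
  fun n => ∑ p ∈ Finset.HasAntidiagonal.antidiagonal n, T p.1 (x p.2)

/-- A formal deformation (à la Gerstenhaber) of a unital `k`-algebra `A`:
a family of `k`-bilinear cochains `C r` with `C 0` the original product, whose
convolution product on `A[[λ]]` is associative and unital (with the same unit). -/
structure FormalDeformation (k A : Type*) [CommRing k] [Ring A] [Algebra k A] where
  C : ℕ → A →ₗ[k] A →ₗ[k] A
  C_zero : ∀ a b : A, C 0 a b = a * b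
  assoc : ∀ x y z : ℕ → A,
    fdConv (fun r a b => C r a b) (fdConv (fun r a b => C r a b) x y) z =
      fdConv (fun r a b => C r a b) x (fdConv (fun r a b => C r a b) y z)
  one_mul : ∀ x : ℕ → A, fdConv (fun r a b => C r a b) (fdOne A) x = x
  mul_one : ∀ x : ℕ → A, fdConv (fun r a b => C r a b) x (fdOne A) = x

namespace FormalDeformation

variable {k A : Type*} [CommRing k] [Ring A] [Algebra k A]

/-- The deformed product on `A[[λ]]`. -/
def mul (D : FormalDeformation k A) : (ℕ → A) → (ℕ → A) → ℕ → A :=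
  fdConv fun r a b => D.C r a b

/-- A deformation of a `*`-algebra is Hermitian if the coefficientwise extension of
the involution is still an involution for the deformed product. -/
def IsHermitian [StarRing A] (D : FormalDeformation k A) : Prop :=
  ∀ x y : ℕ → A, fdStar (D.mul x y) = D.mul (fdStar y) (fdStar x)

/-- The extension of the deformation cochains to matrices. -/
def matC (D : FormalDeformation k A) (n : ℕ) (r : ℕ)
    (L S : Matrix (Fin n) (Fin n) A) : Matrix (Fin n) (Fin n) A :=
  Matrix.of fun i j => ∑ s, D.C r (L i s) (S s j)

/-- The deformed product on `M_n(A)[[λ]] = M_n(A[[λ]])`. -/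
def matMul (D : FormalDeformation k A) (n : ℕ) :
    (ℕ → Matrix (Fin n) (Fin n) A) → (ℕ → Matrix (Fin n) (Fin n) A) →
      ℕ → Matrix (Fin n) (Fin n) A :=
  fdConv (D.matC n)

/-- The deformed left action of `M_n(A)[[λ]]` on column vectors `A^n[[λ]]`. -/
def mvMul (D : FormalDeformation k A) (n : ℕ) :
    (ℕ → Matrix (Fin n) (Fin n) A) → (ℕ → Fin n → A) → ℕ → Fin n → A :=
  fdConv fun r L v => fun i => ∑ j, D.C r (L i j) (v j)

/-- The deformed right action of `A[[λ]]` on column vectors `A^n[[λ]]`. -/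
def vsMul (D : FormalDeformation k A) (n : ℕ) :
    (ℕ → Fin n → A) → (ℕ → A) → ℕ → Fin n → A :=
  fdConv fun r v a => fun i => D.C r (v i) a

end FormalDeformation

/-- The bracket `{x, a}_E = P₀ {x, a}` on `E = P₀Aⁿ` obtained from the
semi-classical limit of the deformed module structure, where
`{f, g} = C₁(f,g) − C₁(g,f)`. -/
def modBracket {k A : Type*} [CommRing k] [CommRing A] [Algebra k A]
    (D : FormalDeformation k A) {n : ℕ} (P₀ : Matrix (Fin n) (Fin n) A)
    (x : Fin n → A) (a : A) : Fin n → A :=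
  P₀.mulVec fun i => D.C 1 (x i) a - D.C 1 a (x i)

/-! Comparing the coefficients of `λ` in `(a ⋆ b) ⋆ c = a ⋆ (b ⋆ c)` shows that `C₁` is a
Hochschild 2-cocycle. When `A` is commutative, combining three instances of the cocycle identity
makes `{f, g} = C₁(f, g) − C₁(g, f)` a derivation in each argument. Applying the `A`-linear map
`P₀`, which fixes `x`, to these componentwise Leibniz rules gives the rules for `{·,·}_E`. -/

section Convolution

variable {M N P : Type*} [AddCommMonoid P] (B : ℕ → M → N → P) (x : ℕ → M) (y : ℕ → N)

theorem fdConv_apply_zero : fdConv B x y 0 = B 0 (x 0) (y 0) := by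
  simp [fdConv]

theorem fdConv_apply_one :
    fdConv B x y 1 = B 0 (x 0) (y 1) + B 0 (x 1) (y 0) + B 1 (x 0) (y 0) := by
  have antidiagonal_one : (Finset.HasAntidiagonal.antidiagonal 1 : Finset (ℕ × ℕ)) =
      {(0, 1), (1, 0)} := by decide
  simp [fdConv, antidiagonal_one]

end Convolution

namespace FormalDeformation

section Ring

variable {k A : Type*} [CommRing k] [Ring A] [Algebra k A] (D : FormalDeformation k A)

theorem C_one_cocycle (a b c : A) :
    D.C 1 (a * b) c + D.C 1 a b * c = a * D.C 1 b c + D.C 1 a (b * c) := by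
  have h := congrFun (D.assoc (fdC a) (fdC b) (fdC c)) 1
  simp only [fdConv_apply_one, fdConv_apply_zero, fdC, if_pos, one_ne_zero, if_false,
    map_zero, LinearMap.zero_apply, D.C_zero, mul_zero, zero_add, add_zero] at h
  rwa [add_comm] at h

end Ring

section CommRing

variable {k A : Type*} [CommRing k] [CommRing A] [Algebra k A] (D : FormalDeformation k A)

def bracket (f g : A) : A :=
  D.C 1 f g - D.C 1 g f

theorem bracket_swap (f g : A) : D.bracket g f = -D.bracket f g := by
  rw [bracket, bracket, neg_sub]

theorem bracket_mul_left (a b c : A) :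
    D.bracket (a * b) c = a * D.bracket b c + D.bracket a c * b := by
  have h₁ := D.C_one_cocycle a b c
  have h₂ := D.C_one_cocycle c a b
  have h₃ := D.C_one_cocycle a c b
  rw [mul_comm c a] at h₂
  rw [mul_comm c b] at h₃
  unfold bracket
  linear_combination h₁ + h₂ - h₃

theorem bracket_mul_right (a b c : A) :
    D.bracket a (b * c) = D.bracket a b * c + b * D.bracket a c := by
  rw [bracket_swap, bracket_mul_left, bracket_swap D c, bracket_swap D b]
  ring

end CommRing

end FormalDeformation

theorem modBracket_eq_mulVec_bracket {k A : Type*} [CommRing k] [CommRing A] [Algebra k A]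
    (D : FormalDeformation k A) {n : ℕ} (P₀ : Matrix (Fin n) (Fin n) A)
    (x : Fin n → A) (a : A) :
    modBracket D P₀ x a = P₀ *ᵥ fun i => D.bracket (x i) a :=
  rfl

theorem poisson_module_leibniz_general {k A : Type*} [CommRing k] [CommRing A] [Algebra k A]
    (D : FormalDeformation k A)
    (n : ℕ) (P₀ : Matrix (Fin n) (Fin n) A)
    (x : Fin n → A) (hx : P₀.mulVec x = x) (a b c : A) :
    modBracket D P₀ (fun i => x i * c) a =
      (fun i => modBracket D P₀ x a i * c + x i * (D.C 1 c a - D.C 1 a c)) ∧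
    modBracket D P₀ x (a * b) =
      (fun i => modBracket D P₀ x a i * b + modBracket D P₀ x b i * a) := by
  simp only [modBracket_eq_mulVec_bracket]
  constructor
  · have leibniz_left : (fun i => D.bracket (x i * c) a) =
        D.bracket c a • x + c • fun i => D.bracket (x i) a := by
      funext i
      simp only [D.bracket_mul_left, Pi.add_apply, Pi.smul_apply, smul_eq_mul]
      ring
    rw [leibniz_left, Matrix.mulVec_add, Matrix.mulVec_smul, Matrix.mulVec_smul, hx]
    funext i
    simp only [Pi.add_apply, Pi.smul_apply, smul_eq_mul, FormalDeformation.bracket]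
    ring
  · have leibniz_right : (fun i => D.bracket (x i) (a * b)) =
        b • (fun i => D.bracket (x i) a) + a • fun i => D.bracket (x i) b := by
      funext i
      simp only [D.bracket_mul_right, Pi.add_apply, Pi.smul_apply, smul_eq_mul]
      ring
    rw [leibniz_right, Matrix.mulVec_add, Matrix.mulVec_smul, Matrix.mulVec_smul]
    funext i
    simp only [Pi.add_apply, Pi.smul_apply, smul_eq_mul]
    ring

/-- part of Proposition 3.4. The bracket `{·,·}_E` satisfies the
Leibniz rules of a right Poisson module. -/
theorem poisson_module_leibniz {k A : Type*} [CommRing k] [CommRing A] [Algebra k A]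
    (D : FormalDeformation k A)
    (n : ℕ) (P₀ : Matrix (Fin n) (Fin n) A) (hP₀ : P₀ * P₀ = P₀)
    (x : Fin n → A) (hx : P₀.mulVec x = x) (a b c : A) :
    modBracket D P₀ (fun i => x i * c) a =
      (fun i => modBracket D P₀ x a i * c + x i * (D.C 1 c a - D.C 1 a c)) ∧
    modBracket D P₀ x (a * b) =
      (fun i => modBracket D P₀ x a i * b + modBracket D P₀ x b i * a) :=
  poisson_module_leibniz_general D n P₀ x hx a b c
end

section
/- Let C be a commutative star ring in which 2 is invertible, A a unital *-algebra over C, and qA = (A[[λ]], ⋆) a Hermitian formal deformation of A. Let P_0 ∈ M_n(A) be a strongly full projection, i.e. there is an invertible τ ∈ A with tr P_0 = (τ τ*)^{-1}. Then every projection P ∈ M_n(A)[[λ]] with P ⋆ P = P, P* = P deforming P_0 is again strongly full: there exists τ' ∈ A[[λ]] which is ⋆-invertible such that (tr P) ⋆ (τ' ⋆ τ'^*) = 1 = (τ' ⋆ τ'^*) ⋆ (tr P), where tr P is the sum of the diagonal entries of P. -/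
open scoped Matrix

/-!
The trace `t` of a Hermitian deformed projection is a Hermitian series whose constant term
`tr P₀ = (τ τ*)⁻¹` is invertible, so `t` is `⋆`-invertible and its inverse `u` is Hermitian with
`u₀ = τ τ*`. Conjugating by the `⋆`-inverse `T` of `τ` gives the Hermitian series `T ⋆ u ⋆ T*` with
constant term `1`; since `2` is invertible it has a `⋆`-square root `s` with `s₀ = 1`, built order by
order, and uniqueness of that root forces `s* = s`. Then `τ' = τ ⋆ s` satisfies `τ' ⋆ τ'* = u`.
-/

open Finset

def fdTrunc {A : Type*} [Zero A] (n : ℕ) (x : ℕ → A) : ℕ → A := fun m => if m < n then x m else 0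

lemma sum_antidiagonal_sum_antidiagonal_ite_snd {M : Type*} [AddCommMonoid M] (n : ℕ)
    (f : ℕ × ℕ → ℕ × ℕ → M) :
    ∑ p ∈ antidiagonal n, ∑ q ∈ antidiagonal p.2, (if q.2 = n then f p q else 0) =
      f (0, n) (0, n) := by
  have key : ∀ p ∈ antidiagonal n, ∀ q ∈ antidiagonal p.2,
      (q.2 = n ↔ p = (0, n) ∧ q = (0, n)) := by
    rintro ⟨a, b⟩ hp ⟨c, d⟩ hq
    simp only [HasAntidiagonal.mem_antidiagonal] at hp hq
    simp only [Prod.mk.injEq]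
    omega
  rw [sum_congr rfl fun p hp => sum_congr rfl fun q hq => if_congr (key p hp q hq) rfl rfl]
  simp [ite_and, sum_ite_eq']

lemma sum_antidiagonal_sum_antidiagonal_ite_fst {M : Type*} [AddCommMonoid M] (n : ℕ)
    (f : ℕ × ℕ → ℕ × ℕ → M) :
    ∑ p ∈ antidiagonal n, ∑ q ∈ antidiagonal p.2, (if q.1 = n then f p q else 0) =
      f (0, n) (n, 0) := by
  have key : ∀ p ∈ antidiagonal n, ∀ q ∈ antidiagonal p.2,
      (q.1 = n ↔ p = (0, n) ∧ q = (n, 0)) := by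
    rintro ⟨a, b⟩ hp ⟨c, d⟩ hq
    simp only [HasAntidiagonal.mem_antidiagonal] at hp hq
    simp only [Prod.mk.injEq]
    omega
  rw [sum_congr rfl fun p hp => sum_congr rfl fun q hq => if_congr (key p hp q hq) rfl rfl]
  simp [ite_and, sum_ite_eq']

namespace FormalDeformation

variable {k A : Type*} [CommRing k] [Ring A] [Algebra k A] (D : FormalDeformation k A)

lemma mul_apply (x y : ℕ → A) (n : ℕ) :
    D.mul x y n = ∑ p ∈ antidiagonal n, ∑ q ∈ antidiagonal p.2, D.C p.1 (x q.1) (y q.2) := rfl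

lemma mul_apply_zero (x y : ℕ → A) : D.mul x y 0 = x 0 * y 0 := by
  simp [mul_apply, D.C_zero]

protected lemma mul_assoc (x y z : ℕ → A) : D.mul (D.mul x y) z = D.mul x (D.mul y z) :=
  D.assoc x y z

lemma fdOne_mul (x : ℕ → A) : D.mul (fdOne A) x = x := D.one_mul x

lemma mul_fdOne (x : ℕ → A) : D.mul x (fdOne A) = x := D.mul_one x

lemma left_inv_eq_right_inv {x y z : ℕ → A} (hzx : D.mul z x = fdOne A)
    (hxy : D.mul x y = fdOne A) : z = y := by
  rw [← D.mul_fdOne z, ← hxy, ← D.mul_assoc, hzx, D.fdOne_mul]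

lemma mul_apply_eq_add_mul_fdTrunc_right (x y : ℕ → A) (n : ℕ) :
    D.mul x y n = x 0 * y n + D.mul x (fdTrunc n y) n := by
  rw [mul_apply, mul_apply, ← D.C_zero,
    ← sum_antidiagonal_sum_antidiagonal_ite_snd n fun p q => D.C p.1 (x q.1) (y q.2),
    ← sum_add_distrib]
  refine sum_congr rfl fun p hp => ?_
  rw [← sum_add_distrib]
  refine sum_congr rfl fun q hq => ?_
  rw [HasAntidiagonal.mem_antidiagonal] at hp hq
  rcases (show q.2 < n ∨ q.2 = n by omega) with hlt | heq
  · simp [fdTrunc, hlt, hlt.ne]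
  · simp [fdTrunc, heq]

lemma mul_apply_eq_add_mul_fdTrunc_left (x y : ℕ → A) (n : ℕ) :
    D.mul x y n = x n * y 0 + D.mul (fdTrunc n x) y n := by
  rw [mul_apply, mul_apply, ← D.C_zero,
    ← sum_antidiagonal_sum_antidiagonal_ite_fst n fun p q => D.C p.1 (x q.1) (y q.2),
    ← sum_add_distrib]
  refine sum_congr rfl fun p hp => ?_
  rw [← sum_add_distrib]
  refine sum_congr rfl fun q hq => ?_
  rw [HasAntidiagonal.mem_antidiagonal] at hp hq
  rcases (show q.1 < n ∨ q.1 = n by omega) with hlt | heq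
  · simp [fdTrunc, hlt, hlt.ne]
  · simp [fdTrunc, heq]

lemma mul_apply_eq_add_add_mul_fdTrunc (x y : ℕ → A) {n : ℕ} (hn : n ≠ 0) :
    D.mul x y n = x 0 * y n + x n * y 0 + D.mul (fdTrunc n x) (fdTrunc n y) n := by
  rw [D.mul_apply_eq_add_mul_fdTrunc_right, D.mul_apply_eq_add_mul_fdTrunc_left x (fdTrunc n y),
    add_assoc]
  simp [fdTrunc, Nat.pos_of_ne_zero hn]

def rightInv (v : A) (x : ℕ → A) : ℕ → A
  | 0 => v
  | n + 1 => -(v * D.mul x (fun m => if m < n + 1 then rightInv v x m else 0) (n + 1))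

lemma rightInv_zero (v : A) (x : ℕ → A) : D.rightInv v x 0 = v := by
  rw [rightInv]

lemma rightInv_succ (v : A) (x : ℕ → A) (n : ℕ) :
    D.rightInv v x (n + 1) = -(v * D.mul x (fdTrunc (n + 1) (D.rightInv v x)) (n + 1)) := by
  rw [rightInv]
  rfl

lemma mul_rightInv {v : A} {x : ℕ → A} (hv : x 0 * v = 1) :
    D.mul x (D.rightInv v x) = fdOne A := by
  funext n
  cases n with
  | zero => rw [mul_apply_zero, rightInv_zero, hv]; rfl
  | succ n =>
    rw [D.mul_apply_eq_add_mul_fdTrunc_right, rightInv_succ, mul_neg, ← _root_.mul_assoc, hv,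
      _root_.one_mul, neg_add_cancel]
    rfl

/-- The right inverse is also a left inverse because it has itself a right inverse. -/
lemma exists_mul_eq_fdOne {x : ℕ → A} {v : A} (hxv : x 0 * v = 1) (hvx : v * x 0 = 1) :
    ∃ y, D.mul x y = fdOne A ∧ D.mul y x = fdOne A ∧ y 0 = v := by
  have hxy := D.mul_rightInv hxv
  have hyz := D.mul_rightInv (x := D.rightInv v x) (v := x 0) (by rw [rightInv_zero, hvx])
  refine ⟨D.rightInv v x, hxy, ?_, D.rightInv_zero v x⟩
  rwa [← D.left_inv_eq_right_inv hxy hyz] at hyz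

def sqrt [Invertible (2 : k)] (h : ℕ → A) : ℕ → A
  | 0 => 1
  | n + 1 => ⅟(2 : k) • (h (n + 1) - D.mul (fun m => if m < n + 1 then sqrt h m else 0)
      (fun m => if m < n + 1 then sqrt h m else 0) (n + 1))

lemma sqrt_zero [Invertible (2 : k)] (h : ℕ → A) : D.sqrt h 0 = 1 := by
  rw [sqrt]

lemma sqrt_succ [Invertible (2 : k)] (h : ℕ → A) (n : ℕ) :
    D.sqrt h (n + 1) = ⅟(2 : k) • (h (n + 1) -
      D.mul (fdTrunc (n + 1) (D.sqrt h)) (fdTrunc (n + 1) (D.sqrt h)) (n + 1)) := by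
  rw [sqrt]
  rfl

lemma mul_self_apply_succ {s : ℕ → A} (hs : s 0 = 1) (n : ℕ) :
    D.mul s s (n + 1) =
      (2 : k) • s (n + 1) + D.mul (fdTrunc (n + 1) s) (fdTrunc (n + 1) s) (n + 1) := by
  rw [D.mul_apply_eq_add_add_mul_fdTrunc s s n.succ_ne_zero, hs, _root_.one_mul, _root_.mul_one,
    two_smul]

lemma mul_sqrt_self [Invertible (2 : k)] {h : ℕ → A} (h0 : h 0 = 1) :
    D.mul (D.sqrt h) (D.sqrt h) = h := by
  funext n
  cases n with
  | zero => rw [mul_apply_zero, sqrt_zero, _root_.one_mul, h0]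
  | succ n =>
    rw [D.mul_self_apply_succ (D.sqrt_zero h), sqrt_succ, smul_smul, mul_invOf_self, one_smul,
      sub_add_cancel]

lemma eq_sqrt_of_mul_self_eq [Invertible (2 : k)] {s h : ℕ → A} (hs0 : s 0 = 1)
    (hs : D.mul s s = h) : s = D.sqrt h := by
  funext n
  induction n using Nat.strong_induction_on with
  | _ n ih =>
    cases n with
    | zero => rw [hs0, sqrt_zero]
    | succ n =>
      have htrunc : fdTrunc (n + 1) s = fdTrunc (n + 1) (D.sqrt h) := by
        funext m
        simp only [fdTrunc]
        split_ifs with hm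
        exacts [ih m hm, rfl]
      rw [sqrt_succ, ← congrFun hs (n + 1), D.mul_self_apply_succ hs0, htrunc,
        add_sub_cancel_right, smul_smul, invOf_mul_self, one_smul]

section Hermitian

variable [StarRing A] {D}

lemma fdStar_fdOne : fdStar (fdOne A) = fdOne A := by
  funext n
  simp only [fdStar, fdOne]
  split_ifs <;> simp

lemma fdStar_fdStar (x : ℕ → A) : fdStar (fdStar x) = x := by
  funext n
  exact star_star (x n)

lemma IsHermitian.fdStar_eq_of_mul_eq_fdOne (hD : D.IsHermitian) {x y : ℕ → A}
    (hx : fdStar x = x) (hxy : D.mul x y = fdOne A) : fdStar y = y := by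
  have hyx : D.mul (fdStar y) x = fdOne A := by
    rw [← fdStar_fdOne, ← hxy, hD, hx]
  exact D.left_inv_eq_right_inv hyx hxy

lemma IsHermitian.fdStar_sqrt [Invertible (2 : k)] (hD : D.IsHermitian) {h : ℕ → A}
    (h0 : h 0 = 1) (hh : fdStar h = h) : fdStar (D.sqrt h) = D.sqrt h := by
  refine D.eq_sqrt_of_mul_self_eq ?_ ?_
  · rw [fdStar, sqrt_zero, star_one]
  · rw [← hD, D.mul_sqrt_self h0, hh]

lemma IsHermitian.exists_mul_fdStar_eq [Invertible (2 : k)] (hD : D.IsHermitian) {u : ℕ → A}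
    (hu : fdStar u = u) {τ σ : A} (hτσ : τ * σ = 1) (hστ : σ * τ = 1)
    (hu0 : u 0 = τ * star τ) : ∃ τ' : ℕ → A, D.mul τ' (fdStar τ') = u ∧ τ' 0 = τ := by
  obtain ⟨T, hτT, -, hT0⟩ := D.exists_mul_eq_fdOne (x := fdC τ) hτσ hστ
  have hTτ : D.mul (fdStar T) (fdStar (fdC τ)) = fdOne A := by rw [← hD, hτT, fdStar_fdOne]
  set g := D.mul T (D.mul u (fdStar T))
  have hg0 : g 0 = 1 := by
    simp only [g, mul_apply_zero, hT0, hu0, fdStar]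
    rw [_root_.mul_assoc τ, ← star_mul, hστ, star_one, _root_.mul_one, hστ]
  have hg : fdStar g = g := by rw [hD, hD, fdStar_fdStar, hu, D.mul_assoc]
  refine ⟨D.mul (fdC τ) (D.sqrt g), ?_, by rw [mul_apply_zero, sqrt_zero, _root_.mul_one]; rfl⟩
  rw [hD, hD.fdStar_sqrt hg0 hg]
  simp only [D.mul_assoc]
  rw [← D.mul_assoc (D.sqrt g), D.mul_sqrt_self hg0]
  simp only [g, D.mul_assoc]
  rw [hTτ, D.mul_fdOne, ← D.mul_assoc, hτT, D.fdOne_mul]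

lemma IsHermitian.exists_mul_mul_fdStar_eq_fdOne [Invertible (2 : k)] (hD : D.IsHermitian)
    {t : ℕ → A} (ht : fdStar t = t) {τ σ : A} (hτσ : τ * σ = 1) (hστ : σ * τ = 1)
    (htτ : t 0 * (τ * star τ) = 1) (hτt : τ * star τ * t 0 = 1) :
    ∃ τ' σ' : ℕ → A,
      D.mul τ' σ' = fdOne A ∧ D.mul σ' τ' = fdOne A ∧
      D.mul t (D.mul τ' (fdStar τ')) = fdOne A ∧ D.mul (D.mul τ' (fdStar τ')) t = fdOne A := by
  obtain ⟨u, htu, hut, hu0⟩ := D.exists_mul_eq_fdOne htτ hτt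
  obtain ⟨τ', hτ'u, hτ'0⟩ :=
    hD.exists_mul_fdStar_eq (hD.fdStar_eq_of_mul_eq_fdOne ht htu) hτσ hστ hu0
  obtain ⟨σ', hτ'σ', hσ'τ', -⟩ :=
    D.exists_mul_eq_fdOne (x := τ') (by rw [hτ'0, hτσ]) (by rw [hτ'0, hστ])
  exact ⟨τ', σ', hτ'σ', hσ'τ', hτ'u ▸ htu, hτ'u ▸ hut⟩

end Hermitian

end FormalDeformation

theorem deformed_projection_strongly_full_general {C A : Type*} [CommRing C]
    [Invertible (2 : C)] [Ring A] [Algebra C A] [StarRing A]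
    (D : FormalDeformation C A) (hD : D.IsHermitian) (n : ℕ)
    (P₀ : Matrix (Fin n) (Fin n) A)
    -- P₀ is strongly full: τ is invertible and tr P₀ = (τ τ*)⁻¹
    (τ σ : A) (hτσ : τ * σ = 1) (hστ : σ * τ = 1)
    (htr : P₀.trace * (τ * star τ) = 1) (htr' : (τ * star τ) * P₀.trace = 1)
    -- P is a projection of Mₙ(qA) deforming P₀
    (P : ℕ → Matrix (Fin n) (Fin n) A)
    (hPherm : ∀ m, (P m)ᴴ = P m) (hP0 : P 0 = P₀) :
    ∃ τ' σ' : ℕ → A,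
      D.mul τ' σ' = fdOne A ∧ D.mul σ' τ' = fdOne A ∧
      D.mul (fun m => (P m).trace) (D.mul τ' (fdStar τ')) = fdOne A ∧
      D.mul (D.mul τ' (fdStar τ')) (fun m => (P m).trace) = fdOne A := by
  have htrace : fdStar (fun m => (P m).trace) = fun m => (P m).trace := by
    funext m
    rw [fdStar, ← Matrix.trace_conjTranspose, hPherm]
  subst hP0
  exact hD.exists_mul_mul_fdStar_eq_fdOne htrace hτσ hστ htr htr'

/-- Proposition 4.4. Every projection `P` of `Mₙ(qA)` deforming a
strongly full projection `P₀ ∈ Mₙ(A)` is again strongly full: there is a ⋆-invertible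
`τ' ∈ A[[λ]]` with `(tr P) ⋆ (τ' ⋆ τ'^*) = 1 = (τ' ⋆ τ'^*) ⋆ (tr P)`. -/
theorem deformed_projection_strongly_full {C A : Type*} [CommRing C] [StarRing C]
    [Invertible (2 : C)] [Ring A] [Algebra C A] [StarRing A] [StarModule C A]
    (D : FormalDeformation C A) (hD : D.IsHermitian) (n : ℕ)
    (P₀ : Matrix (Fin n) (Fin n) A)
    (hP₀idem : P₀ * P₀ = P₀) (hP₀herm : P₀ᴴ = P₀)
    -- P₀ is strongly full: τ is invertible and tr P₀ = (τ τ*)⁻¹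
    (τ σ : A) (hτσ : τ * σ = 1) (hστ : σ * τ = 1)
    (htr : P₀.trace * (τ * star τ) = 1) (htr' : (τ * star τ) * P₀.trace = 1)
    -- P is a projection of Mₙ(qA) deforming P₀
    (P : ℕ → Matrix (Fin n) (Fin n) A)
    (hPidem : D.matMul n P P = P) (hPherm : ∀ m, (P m)ᴴ = P m) (hP0 : P 0 = P₀) :
    ∃ τ' σ' : ℕ → A,
      D.mul τ' σ' = fdOne A ∧ D.mul σ' τ' = fdOne A ∧
      D.mul (fun m => (P m).trace) (D.mul τ' (fdStar τ')) = fdOne A ∧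
      D.mul (D.mul τ' (fdStar τ')) (fun m => (P m).trace) = fdOne A :=
  deformed_projection_strongly_full_general D hD n P₀ τ σ hτσ hστ htr htr' P hPherm hP0
end
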